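/- arXiv:2008.00480 — 3 statements merged into one kernel-verified Lean document; each statement's English description precedes it below -/
import Mathlib

section
/- Let V be a real inner product space, v_1,...,v_n vectors in V with ⟨v_i,v_i⟩ = 2, and fix an index k. Define v_i' = -v_i if i = k, v_i' = v_i - ⟨v_i, v_k⟩ v_k if i ∈ S (for an arbitrary subset S not containing k), and v_i' = v_i otherwise. Then the Gram matrix of (v_1',...,v_n') defines the same quadratic form as the Gram matrix of (v_1,...,v_n); in particular the two Gram matrices have the same rank and the same positive semi-definiteness. -/
/-! The mutated family is obtained from `v` by the coefficient matrix `P` whose `i`-th column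
expresses `v' i` in terms of `v`, so the Gram matrix changes by the congruence `Pᵀ G P`.
Mutation with fixed coefficients is an involution of families, hence `P * P = 1`, and a
congruence by an invertible matrix preserves rank and positive semi-definiteness. -/

open scoped RealInnerProductSpace
open Matrix

section Mutation

variable {ι R M N : Type*} [DecidableEq ι] [Ring R] [AddCommGroup M] [Module R M]

def mutation (c : ι → R) (k : ι) (S : Finset ι) (f : ι → M) : ι → M :=
  fun i => if i = k then -f i else if i ∈ S then f i - c i • f k else f i

variable (c : ι → R) (k : ι) (S : Finset ι)

theorem mutation_mutation (f : ι → M) : mutation c k S (mutation c k S f) = f := by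
  funext i
  by_cases hik : i = k
  · simp [mutation, hik]
  · by_cases hiS : i ∈ S <;> simp [mutation, hik, hiS]

theorem LinearMap.comp_mutation [AddCommGroup N] [Module R N] (L : M →ₗ[R] N) (f : ι → M) :
    L ∘ mutation c k S f = mutation c k S (L ∘ f) := by
  funext i
  by_cases hik : i = k
  · simp [mutation, hik]
  · by_cases hiS : i ∈ S <;> simp [mutation, hik, hiS]

end Mutation

section MutationMatrix

variable {ι R M : Type*} [Fintype ι] [DecidableEq ι] [CommRing R] [AddCommGroup M] [Module R M]
variable (c : ι → R) (k : ι) (S : Finset ι)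

def mutationMatrix : Matrix ι ι R :=
  of fun m i => mutation c k S (fun j => Pi.single j (1 : R)) i m

theorem mutation_eq_sum_smul (f : ι → M) (i : ι) :
    mutation c k S f i = ∑ m, mutationMatrix c k S m i • f m := by
  set L := Fintype.linearCombination R f
  have hL : (L ∘ fun j => Pi.single j 1) = f :=
    funext fun j => by simp [L, Fintype.linearCombination_apply_single]
  calc mutation c k S f i = mutation c k S (L ∘ fun j => Pi.single j 1) i := by rw [hL]
    _ = L (mutation c k S (fun j => Pi.single j 1) i) := by rw [← LinearMap.comp_mutation]; rfl
    _ = ∑ m, mutationMatrix c k S m i • f m := Fintype.linearCombination_apply R f _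

theorem mutationMatrix_mul_self : mutationMatrix c k S * mutationMatrix c k S = 1 := by
  ext m i
  have h := congrFun
    (mutation_eq_sum_smul c k S (mutation c k S fun j => Pi.single j (1 : R)) i) m
  rw [mutation_mutation] at h
  simp only [Finset.sum_apply, Pi.smul_apply, smul_eq_mul] at h
  calc (mutationMatrix c k S * mutationMatrix c k S) m i
      = ∑ l, mutationMatrix c k S l i * mutationMatrix c k S m l := by
        rw [mul_apply]; exact Finset.sum_congr rfl fun l _ => mul_comm _ _
    _ = (Pi.single i 1 : ι → R) m := h.symm
    _ = (1 : Matrix ι ι R) m i := by rw [one_apply, Pi.single_apply]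

end MutationMatrix

theorem Matrix.gram_sum_smul {𝕜 E n ι : Type*} [RCLike 𝕜] [SeminormedAddCommGroup E]
    [InnerProductSpace 𝕜 E] [Fintype n] [Fintype ι] (v : n → E) (B : Matrix n ι 𝕜) :
    gram 𝕜 (fun j => ∑ m, B m j • v m) = Bᴴ * gram 𝕜 v * B := by
  ext i j
  simp only [gram_apply, sum_inner, inner_sum, inner_smul_left, inner_smul_right, mul_apply,
    conjTranspose_apply, Finset.sum_mul, Finset.mul_sum, RCLike.star_def]
  refine Finset.sum_congr rfl fun l _ => Finset.sum_congr rfl fun m _ => ?_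
  ring

theorem mutation_preserves_quadratic_form_general {E : Type*} [NormedAddCommGroup E]
    [InnerProductSpace ℝ E] {n : ℕ} (v : Fin n → E)
    (k : Fin n) (S : Finset (Fin n))
    (v' : Fin n → E)
    (hv' : ∀ i, v' i = if i = k then -v i
      else if i ∈ S then v i - ⟪v i, v k⟫ • v k else v i)
    (G G' : Matrix (Fin n) (Fin n) ℝ)
    (hG : ∀ i j, G i j = ⟪v i, v j⟫) (hG' : ∀ i j, G' i j = ⟪v' i, v' j⟫) :
    (∃ P : Matrix (Fin n) (Fin n) ℝ, IsUnit P.det ∧ G' = P.transpose * G * P) ∧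
      G'.rank = G.rank ∧ (G.PosSemidef ↔ G'.PosSemidef) := by
  set P := mutationMatrix (fun i => ⟪v i, v k⟫) k S
  have hv'P : v' = fun j => ∑ m, P m j • v m :=
    funext fun j => (hv' j).trans (mutation_eq_sum_smul (fun i => ⟪v i, v k⟫) k S v j)
  have hGG' : G' = Pᵀ * G * P := by
    rw [show G = gram ℝ v from Matrix.ext hG, ← conjTranspose_eq_transpose_of_trivial,
      ← gram_sum_smul, ← hv'P]
    exact Matrix.ext hG'
  have hPdet : IsUnit P.det := isUnit_det_of_right_inverse (mutationMatrix_mul_self _ k S)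
  have hP : IsUnit P := (isUnit_iff_isUnit_det P).mpr hPdet
  refine ⟨⟨P, hPdet, hGG'⟩, ?_, ?_⟩
  · rw [hGG', rank_mul_eq_left_of_isUnit_det _ _ hPdet,
      rank_mul_eq_right_of_isUnit_det _ _ (by rwa [det_transpose])]
  · rw [hGG', ← conjTranspose_eq_transpose_of_trivial, ← star_eq_conjTranspose,
      IsUnit.posSemidef_star_left_conjugate_iff hP]

theorem mutation_preserves_quadratic_form {E : Type*} [NormedAddCommGroup E]
    [InnerProductSpace ℝ E] {n : ℕ} (v : Fin n → E) (hnorm : ∀ i, ⟪v i, v i⟫ = 2)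
    (k : Fin n) (S : Finset (Fin n)) (hkS : k ∉ S)
    (v' : Fin n → E)
    (hv' : ∀ i, v' i = if i = k then -v i
      else if i ∈ S then v i - ⟪v i, v k⟫ • v k else v i)
    (G G' : Matrix (Fin n) (Fin n) ℝ)
    (hG : ∀ i j, G i j = ⟪v i, v j⟫) (hG' : ∀ i j, G' i j = ⟪v' i, v' j⟫) :
    (∃ P : Matrix (Fin n) (Fin n) ℝ, IsUnit P.det ∧ G' = P.transpose * G * P) ∧
      G'.rank = G.rank ∧ (G.PosSemidef ↔ G'.PosSemidef) :=
  mutation_preserves_quadratic_form_general v k S v' hv' G G' hG hG'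
end

section
/- With s_1,...,s_5 the reflections of the 8-dimensional space as above (reflections in u_1 = e_2-e_3+δ_1, u_2 = e_1-e_3, u_3 = e_2-e_3+δ_2, u_4 = e_1-e_2, u_5 = e_1-e_4 with the stated bilinear pairing), the relation (s_1 · s_2 s_3 s_4 s_5 s_4 s_3 s_2)^2 = 1 holds. -/
section vec8
variable (a0 a1 a2 a3 a4 a5 a6 a7 : ℝ)
lemma vec8_0 : (![a0,a1,a2,a3,a4,a5,a6,a7] : Fin 8 → ℝ) 0 = a0 := rfl
lemma vec8_1 : (![a0,a1,a2,a3,a4,a5,a6,a7] : Fin 8 → ℝ) 1 = a1 := rfl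
lemma vec8_2 : (![a0,a1,a2,a3,a4,a5,a6,a7] : Fin 8 → ℝ) 2 = a2 := rfl
lemma vec8_3 : (![a0,a1,a2,a3,a4,a5,a6,a7] : Fin 8 → ℝ) 3 = a3 := rfl
lemma vec8_4 : (![a0,a1,a2,a3,a4,a5,a6,a7] : Fin 8 → ℝ) 4 = a4 := rfl
lemma vec8_5 : (![a0,a1,a2,a3,a4,a5,a6,a7] : Fin 8 → ℝ) 5 = a5 := rfl
lemma vec8_6 : (![a0,a1,a2,a3,a4,a5,a6,a7] : Fin 8 → ℝ) 6 = a6 := rfl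
lemma vec8_7 : (![a0,a1,a2,a3,a4,a5,a6,a7] : Fin 8 → ℝ) 7 = a7 := rfl
end vec8


theorem handle_relation_R5_square (Bf : (Fin 8 → ℝ) → (Fin 8 → ℝ) → ℝ)
    (hBf : ∀ x y, Bf x y =
      x 0 * y 0 + x 1 * y 1 + x 2 * y 2 + x 3 * y 3 +
        x 4 * y 6 + x 6 * y 4 + x 5 * y 7 + x 7 * y 5)
    (u : Fin 5 → (Fin 8 → ℝ))
    (hu : u 0 = ![0,1,-1,0,1,0,0,0] ∧ u 1 = ![1,0,-1,0,0,0,0,0] ∧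
          u 2 = ![0,1,-1,0,0,1,0,0] ∧ u 3 = ![1,-1,0,0,0,0,0,0] ∧
          u 4 = ![1,0,0,-1,0,0,0,0])
    (s : Fin 5 → (Fin 8 → ℝ) → (Fin 8 → ℝ))
    (hs : ∀ i x, s i x = x - Bf x (u i) • u i)
    (w : (Fin 8 → ℝ) → (Fin 8 → ℝ))
    (hw : ∀ x, w x = s 0 (s 1 (s 2 (s 3 (s 4 (s 3 (s 2 (s 1 x)))))))) :
    ∀ x, w (w x) = x := by
  obtain ⟨h0, h1, h2, h3, h4⟩ := hu
  have key : ∀ x, w x = ![x 3 + x 7, x 2 - x 6, x 1 + x 6, x 0 - x 7,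
      -x 1 + x 2 + x 4 - x 6, x 0 - x 3 + x 5 - x 7, x 6, x 7] := by
    intro x
    have e1 : s 1 x = ![x 2, x 1, x 0, x 3, x 4, x 5, x 6, x 7] := by
      rw [hs, hBf, h1]; funext j; fin_cases j <;>
        simp [vec8_0, vec8_1, vec8_2, vec8_3, vec8_4, vec8_5, vec8_6, vec8_7, Pi.sub_apply, Pi.smul_apply, smul_eq_mul] <;> ring
    have e2 : s 2 (s 1 x) =
        ![x 2, x 0 - x 7, x 1 + x 7, x 3, x 4, x 0 - x 1 + x 5 - x 7, x 6, x 7] := by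
      rw [hs, e1, hBf, h2]; funext j; fin_cases j <;>
        simp [vec8_0, vec8_1, vec8_2, vec8_3, vec8_4, vec8_5, vec8_6, vec8_7, Pi.sub_apply, Pi.smul_apply, smul_eq_mul] <;> ring
    have e3 : s 3 (s 2 (s 1 x)) =
        ![x 0 - x 7, x 2, x 1 + x 7, x 3, x 4, x 0 - x 1 + x 5 - x 7, x 6, x 7] := by
      rw [hs, e2, hBf, h3]; funext j; fin_cases j <;>
        simp [vec8_0, vec8_1, vec8_2, vec8_3, vec8_4, vec8_5, vec8_6, vec8_7, Pi.sub_apply, Pi.smul_apply, smul_eq_mul] <;> ring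
    have e4 : s 4 (s 3 (s 2 (s 1 x))) =
        ![x 3, x 2, x 1 + x 7, x 0 - x 7, x 4, x 0 - x 1 + x 5 - x 7, x 6, x 7] := by
      rw [hs, e3, hBf, h4]; funext j; fin_cases j <;>
        simp [vec8_0, vec8_1, vec8_2, vec8_3, vec8_4, vec8_5, vec8_6, vec8_7, Pi.sub_apply, Pi.smul_apply, smul_eq_mul] <;> ring
    have e5 : s 3 (s 4 (s 3 (s 2 (s 1 x)))) =
        ![x 2, x 3, x 1 + x 7, x 0 - x 7, x 4, x 0 - x 1 + x 5 - x 7, x 6, x 7] := by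
      rw [hs, e4, hBf, h3]; funext j; fin_cases j <;>
        simp [vec8_0, vec8_1, vec8_2, vec8_3, vec8_4, vec8_5, vec8_6, vec8_7, Pi.sub_apply, Pi.smul_apply, smul_eq_mul] <;> ring
    have e6 : s 2 (s 3 (s 4 (s 3 (s 2 (s 1 x))))) =
        ![x 2, x 1, x 3 + x 7, x 0 - x 7, x 4, x 0 - x 3 + x 5 - x 7, x 6, x 7] := by
      rw [hs, e5, hBf, h2]; funext j; fin_cases j <;>
        simp [vec8_0, vec8_1, vec8_2, vec8_3, vec8_4, vec8_5, vec8_6, vec8_7, Pi.sub_apply, Pi.smul_apply, smul_eq_mul] <;> ring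
    have e7 : s 1 (s 2 (s 3 (s 4 (s 3 (s 2 (s 1 x)))))) =
        ![x 3 + x 7, x 1, x 2, x 0 - x 7, x 4, x 0 - x 3 + x 5 - x 7, x 6, x 7] := by
      rw [hs, e6, hBf, h1]; funext j; fin_cases j <;>
        simp [vec8_0, vec8_1, vec8_2, vec8_3, vec8_4, vec8_5, vec8_6, vec8_7, Pi.sub_apply, Pi.smul_apply, smul_eq_mul] <;> ring
    rw [hw, e7, hs, hBf, h0]; funext j; fin_cases j <;>
      simp [vec8_0, vec8_1, vec8_2, vec8_3, vec8_4, vec8_5, vec8_6, vec8_7, Pi.sub_apply, Pi.smul_apply, smul_eq_mul] <;> ring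
  intro x
  rw [key, key]
  funext j
  fin_cases j <;> simp [vec8_0, vec8_1, vec8_2, vec8_3, vec8_4, vec8_5, vec8_6, vec8_7] <;> ring
end

section
/- Let e_1, e_2, e_3 be orthonormal in R^3 and let u_1 = e_1-e_2, u_2 = e_2-e_3, u_3 = e_3-e_1 (the three vertices of an oriented triangle with companion vectors summing to zero). Let A be their Gram matrix, and let A' = μ_2(A) be the Gram matrix of the mutated vectors u'_1 = u_1 - ⟨u_1,u_2⟩u_2, u'_2 = -u_2, u'_3 = u_3. Then A' has entry a'_13 = -2 while the mutated skew-symmetric matrix μ_2(B) (for B the matrix of the oriented 3-cycle with all weights 1) has b'_13 = 0; hence A' is not a quasi-Cartan companion of μ_2(B). -/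
open scoped RealInnerProductSpace

theorem mutation_not_companion_example (e : Fin 3 → EuclideanSpace ℝ (Fin 3))
    (he : ∀ i, e i = EuclideanSpace.single i 1)
    (u u' : Fin 3 → EuclideanSpace ℝ (Fin 3))
    (hu : u 0 = e 0 - e 1 ∧ u 1 = e 1 - e 2 ∧ u 2 = e 2 - e 0)
    (hu' : u' 0 = u 0 - ⟪u 0, u 1⟫ • u 1 ∧ u' 1 = -u 1 ∧ u' 2 = u 2)
    (B B' : Matrix (Fin 3) (Fin 3) ℤ)
    (hB : B = !![0,1,-1; -1,0,1; 1,-1,0])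
    (hB' : ∀ i j, B' i j = if i = 1 ∨ j = 1 then -B i j
      else B i j + max (B i 1) 0 * max (B 1 j) 0 - max (-B i 1) 0 * max (-B 1 j) 0) :
    ⟪u' 0, u' 2⟫ = -2 ∧ B' 0 2 = 0 ∧
      ¬ ∀ i j, |⟪u' i, u' j⟫| = |(B' i j : ℝ)| := by
  obtain ⟨h0, h1, h2⟩ := hu
  obtain ⟨h0', h1', h2'⟩ := hu'
  have hinner : ⟪u' 0, u' 2⟫ = -2 := by
    rw [h0', h2', h0, h1, h2, he 0, he 1, he 2]
    simp [inner_sub_left, inner_sub_right, inner_smul_left, inner_smul_right,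
      EuclideanSpace.inner_single_left, EuclideanSpace.inner_single_right,
      EuclideanSpace.single_apply]
    norm_num
  have hB02 : B' 0 2 = 0 := by
    rw [hB' 0 2, hB]
    decide
  refine ⟨hinner, hB02, fun h => ?_⟩
  have := h 0 2
  rw [hinner, hB02] at this
  norm_num at this
end
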